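/- arXiv:2407.00073 — 3 statements merged into one kernel-verified Lean document; each statement's English description precedes it below -/
import Mathlib

section
/- Encrypt–Decrypt session key agreement: Let e be a bilinear map on G with generator g, u ∈ G, and h_i ∈ G for each position i. Let S, S̄ be disjoint (occupied/unoccupied positions), U ⊆ S (receivers), Ū = S∖U. With real exponents a_l, b_l for l ∈ S and dummy exponents α_l, β_l for l ∈ S̄ ∪ Ū, define: Ŷ₁ = ∏_{l∈S} g^{a_l} · ∏_{l∈S̄∪Ū} g^{α_l}, C₁ = g^ρ, C₂ = Ŷ₁^ρ, k = e(u^ρ, ∏_{l∈S} g^{b_l} · ∏_{l∈S̄∪Ū} g^{β_l}), and for i ∈ U, d̂_i = ∏_{l∈S} h_i^{a_l} u^{b_l} · ∏_{l∈S̄∪Ū} h_i^{α_l} u^{β_l}. Then e(d̂_i, C₁) · e(h_i, C₂)^{-1} = k. -/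
/-- Encrypt–Decrypt session key agreement: each chosen receiver recovers the sender's key. -/
theorem stmt_10 (G GT : Type*) [CommGroup G] [CommGroup GT]
    (q : ℕ) (hq : q.Prime) (hcard : Nat.card G = q)
    (g u : G) (hgen : ∀ x : G, ∃ m : ℤ, x = g ^ m)
    (e : G → G → GT)
    (heL : ∀ x y z : G, e (x * y) z = e x z * e y z)
    (heR : ∀ x y z : G, e x (y * z) = e x y * e x z)
    (hpow : ∀ (x y : G) (m n : ℤ), e (x ^ m) (y ^ n) = (e x y) ^ (m * n))
    (ι : Type*) [DecidableEq ι] (h : ι → G)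
    (S Sb U : Finset ι) (hSSb : Disjoint S Sb) (hU : U ⊆ S)
    (Ub : Finset ι) (hUb : Ub = S \ U)
    (a b α β : ι → ℤ) (ρ : ℤ)
    (Yhat C₁ C₂ : G) (k : GT) (dhat : ι → G)
    (hYhat : Yhat = (∏ l ∈ S, g ^ (a l)) * ∏ l ∈ Sb ∪ Ub, g ^ (α l))
    (hC₁ : C₁ = g ^ ρ) (hC₂ : C₂ = Yhat ^ ρ)
    (hk : k = e (u ^ ρ) ((∏ l ∈ S, g ^ (b l)) * ∏ l ∈ Sb ∪ Ub, g ^ (β l)))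
    (hdhat : ∀ i, dhat i = (∏ l ∈ S, (h i) ^ (a l) * u ^ (b l)) *
        ∏ l ∈ Sb ∪ Ub, (h i) ^ (α l) * u ^ (β l)) :
    ∀ i ∈ U, e (dhat i) C₁ * (e (h i) C₂)⁻¹ = k := by
  intro i _
  have hprod : ∀ (x : G) (s : Finset ι) (f : ι → ℤ),
      (∏ l ∈ s, x ^ f l) = x ^ (∑ l ∈ s, f l) := by
    intro x s f
    induction s using Finset.induction_on with
    | empty => simp
    | insert hx ih => simp_all [Finset.prod_insert, Finset.sum_insert, zpow_add]
  set A : ℤ := (∑ l ∈ S, a l) + ∑ l ∈ Sb ∪ Ub, α l with hA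
  set B : ℤ := (∑ l ∈ S, b l) + ∑ l ∈ Sb ∪ Ub, β l with hB
  have hY : Yhat = g ^ A := by
    rw [hYhat, hprod, hprod, ← zpow_add]
  have hd : dhat i = (h i) ^ A * u ^ B := by
    rw [hdhat i, Finset.prod_mul_distrib, Finset.prod_mul_distrib,
      hprod, hprod, hprod, hprod, hA, hB, zpow_add, zpow_add]
    exact mul_mul_mul_comm _ _ _ _
  have hk' : k = e u g ^ (ρ * B) := by
    rw [hk, hprod, hprod, ← zpow_add, ← hB, hpow]
  have h1 : e (dhat i) C₁ = e (h i) g ^ (A * ρ) * e u g ^ (B * ρ) := by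
    rw [hd, hC₁, heL]
    have := hpow (h i) g A ρ
    have := hpow u g B ρ
    simp_all
  have h2 : e (h i) C₂ = e (h i) g ^ (A * ρ) := by
    have : e ((h i) ^ (1:ℤ)) (g ^ (A * ρ)) = e (h i) g ^ (1 * (A * ρ)) := hpow _ _ _ _
    simpa [hC₂, hY, ← zpow_mul] using this
  rw [h1, h2, hk', mul_comm B ρ, mul_right_comm, mul_inv_cancel, one_mul]
end

section
/- The session key computed by a receiver is independent of which receiver decrypts: for any two receivers i, i' ∈ U with decryption values d̂_i and d̂_{i'} as in the Encrypt–Decrypt setting, e(d̂_i, C₁) · e(h_i, C₂)^{-1} = e(d̂_{i'}, C₁) · e(h_{i'}, C₂)^{-1}. -/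
lemma prod_zpow_eq_zpow_sum {G : Type*} [CommGroup G] {ι : Type*}
    (x : G) (f : ι → ℤ) (s : Finset ι) :
    ∏ l ∈ s, x ^ f l = x ^ ∑ l ∈ s, f l := by
  induction s using Finset.cons_induction with
  | empty => simp
  | cons i s hi ih => simp [Finset.prod_cons, Finset.sum_cons, ih, zpow_add]

/-- The recovered session key is independent of which receiver decrypts. -/
theorem stmt_11 (G GT : Type*) [CommGroup G] [CommGroup GT]
    (q : ℕ) (hq : q.Prime) (hcard : Nat.card G = q)
    (g u : G) (hgen : ∀ x : G, ∃ m : ℤ, x = g ^ m)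
    (e : G → G → GT)
    (heL : ∀ x y z : G, e (x * y) z = e x z * e y z)
    (heR : ∀ x y z : G, e x (y * z) = e x y * e x z)
    (hpow : ∀ (x y : G) (m n : ℤ), e (x ^ m) (y ^ n) = (e x y) ^ (m * n))
    (ι : Type*) [DecidableEq ι] (h : ι → G)
    (S T U : Finset ι) (hST : Disjoint S T) (hU : U ⊆ S)
    (a b α β : ι → ℤ) (ρ : ℤ)
    (C₁ C₂ : G) (dhat : ι → G)
    (hC₁ : C₁ = g ^ ρ)
    (hC₂ : C₂ = ((∏ l ∈ S, g ^ (a l)) * ∏ l ∈ T, g ^ (α l)) ^ ρ)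
    (hdhat : ∀ i, dhat i = (∏ l ∈ S, (h i) ^ (a l) * u ^ (b l)) *
        ∏ l ∈ T, (h i) ^ (α l) * u ^ (β l)) :
    ∀ i ∈ U, ∀ i' ∈ U,
      e (dhat i) C₁ * (e (h i) C₂)⁻¹ = e (dhat i') C₁ * (e (h i') C₂)⁻¹ := by
  set A : ℤ := (∑ l ∈ S, a l) + ∑ l ∈ T, α l with hA
  set B : ℤ := (∑ l ∈ S, b l) + ∑ l ∈ T, β l with hB
  have hC₂' : C₂ = g ^ (A * ρ) := by
    rw [hC₂, prod_zpow_eq_zpow_sum, prod_zpow_eq_zpow_sum, ← zpow_add, ← zpow_mul]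
  have hd : ∀ i, dhat i = h i ^ A * u ^ B := by
    intro i
    rw [hdhat i, Finset.prod_mul_distrib, Finset.prod_mul_distrib,
      prod_zpow_eq_zpow_sum, prod_zpow_eq_zpow_sum,
      prod_zpow_eq_zpow_sum, prod_zpow_eq_zpow_sum, hA, hB,
      zpow_add, zpow_add]
    ac_rfl
  have key : ∀ i, e (dhat i) C₁ * (e (h i) C₂)⁻¹ = e u g ^ (B * ρ) := by
    intro i
    have h1 : e (h i) C₂ = e (h i) g ^ (A * ρ) := by
      have := hpow (h i) g 1 (A * ρ)
      simpa [hC₂'] using this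
    rw [hd i, hC₁, heL, hpow, hpow, h1]
    exact mul_inv_cancel_comm _ _
  intro i _ i' _
  rw [key i, key i']
end

section
/- Excluded member cannot trivially use its key: Let i ∈ Ū (excluded from the receiver set). Its decryption key d_i (computed over S ∪ S̄, i.e., real keys for S and dummy keys for S̄ only) satisfies e(d_i · ∏_{l∈Ū} h_i^{α_l} u^{β_l}, C₁) · e(h_i, C₂)^{-1} = k, where the correction factor ∏_{l∈Ū} h_i^{α_l} u^{β_l} involves the dummy secret exponents α_l, β_l for l ∈ Ū; i.e., the decryption equation for an excluded member holds only after multiplying by this correction term. -/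
private lemma prod_zpow_sum {G : Type*} [CommGroup G] {ι : Type*} (T : Finset ι)
    (x : G) (f : ι → ℤ) : ∏ l ∈ T, x ^ f l = x ^ (∑ l ∈ T, f l) := by
  classical
  induction T using Finset.induction_on with
  | empty => simp
  | insert hnm ih => simp_all [Finset.prod_insert, Finset.sum_insert, zpow_add]

/-- An excluded member's decryption equation holds only after multiplying its key by
    the correction factor ∏_{l∈Ū} h_i^{α_l} u^{β_l}. -/
theorem stmt_17 (G GT : Type*) [CommGroup G] [CommGroup GT]
    (q : ℕ) (hq : q.Prime) (hcard : Nat.card G = q)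
    (g u : G) (hgen : ∀ x : G, ∃ m : ℤ, x = g ^ m)
    (e : G → G → GT)
    (heL : ∀ x y z : G, e (x * y) z = e x z * e y z)
    (heR : ∀ x y z : G, e x (y * z) = e x y * e x z)
    (hpow : ∀ (x y : G) (m n : ℤ), e (x ^ m) (y ^ n) = (e x y) ^ (m * n))
    (ι : Type*) [DecidableEq ι] (h : ι → G)
    (S Sb U : Finset ι) (hSSb : Disjoint S Sb) (hU : U ⊆ S)
    (Ub : Finset ι) (hUb : Ub = S \ U)
    (a b α β : ι → ℤ) (ρ : ℤ)
    (C₁ C₂ : G) (k : GT) (d : ι → G)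
    (hC₁ : C₁ = g ^ ρ)
    (hC₂ : C₂ = ((∏ l ∈ S, g ^ (a l)) * ∏ l ∈ Sb ∪ Ub, g ^ (α l)) ^ ρ)
    (hk : k = e (u ^ ρ) ((∏ l ∈ S, g ^ (b l)) * ∏ l ∈ Sb ∪ Ub, g ^ (β l)))
    (hd : ∀ i, d i = (∏ l ∈ S, (h i) ^ (a l) * u ^ (b l)) *
        ∏ l ∈ Sb, (h i) ^ (α l) * u ^ (β l)) :
    ∀ i ∈ Ub,
      e (d i * ∏ l ∈ Ub, (h i) ^ (α l) * u ^ (β l)) C₁ * (e (h i) C₂)⁻¹ = k := by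
  intro i _
  obtain ⟨m, hm⟩ := hgen (h i)
  obtain ⟨n, hn⟩ := hgen u
  have hdisj : Disjoint Sb Ub := by
    subst hUb
    exact (hSSb.symm).mono_right (Finset.sdiff_subset)
  set A : ℤ := (∑ l ∈ S, a l) + ∑ l ∈ Sb ∪ Ub, α l with hA
  set B : ℤ := (∑ l ∈ S, b l) + ∑ l ∈ Sb ∪ Ub, β l with hB
  have hkey : d i * ∏ l ∈ Ub, (h i) ^ (α l) * u ^ (β l) = (h i) ^ A * u ^ B := by
    rw [hd i, mul_assoc, ← Finset.prod_union hdisj]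
    simp only [Finset.prod_mul_distrib, prod_zpow_sum, hA, hB, zpow_add]
    simp [mul_comm, mul_assoc, mul_left_comm]
  have hC₂' : C₂ = g ^ (A * ρ) := by
    rw [hC₂, prod_zpow_sum, prod_zpow_sum, ← zpow_add, ← zpow_mul]
  have hk' : k = (e g g) ^ (n * ρ * B) := by
    rw [hk, prod_zpow_sum, prod_zpow_sum, ← zpow_add, hn, ← zpow_mul, hpow]
  have e1 : e (g ^ (m * A + n * B)) (g ^ ρ) = e g g ^ ((m * A + n * B) * ρ) := hpow ..
  have e2 : e (g ^ m) (g ^ (A * ρ)) = e g g ^ (m * (A * ρ)) := hpow ..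
  rw [hkey, hm, hn, hC₁, hC₂', ← zpow_mul, ← zpow_mul, ← zpow_add, e1, e2, hk',
    ← zpow_neg, ← zpow_add]
  congr 1
  ring
end
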